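/- arXiv:2006.03456 — 2 statements merged into one kernel-verified Lean document; each statement's English description precedes it below -/
import Mathlib

section
/- Let T be the standard C-tree T(a₁,…,a_k) determined by a weakly decreasing sequence n ≥ a₁ ≥ a₂ ≥ ⋯ ≥ a_k ≥ 0, with labeling s(ij) = a_{k-j} − a_{k-j+1} for i+j ≤ k (and a_{k+1} = 0) and s(v) = 0 elsewhere. Then T satisfies the column and admissibility conditions, and its reading is ω(T) = 𝔠(a_k)𝔠(a_{k-1})⋯𝔠(a₁), which is in normal form (a product of block columns with weakly increasing lengths). -/
/-!
Without inner labels every valuation is a partial sum of the labels along a strand, and these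
sums telescope: `q(ij) = a_{k-j}` on the truncation. The column conditions then reduce to
`a_{k-j} ≤ a_{k-j-1}`. The block columns of level `t` are the consecutive intervals
`[a_{k-j+1}, a_{k-j})`, `j < t`, which concatenate to `𝔠(a_{k-t+1})`; and `𝔠(b) ⪯ 𝔠(c)` for
`c ≤ b`, `c ≤ n`, since a column without barred letters carries no configuration.
-/

namespace TypeC

/-- Letters of `C_n` are encoded as indices `0, …, 2n-1` in increasing order:
index `x < n` is the unbarred value `x+1`, and index `x ≥ n` is the barred
letter `bar (2n - x)`.  `Nval n z w` is the number `N_z(w)` of letters `x` of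
`w` with `x ≤ z` or `x ≥ z̄` (as values). -/
def Nval (n z : ℕ) (w : List ℕ) : ℕ :=
  w.countP (fun x => decide (x + 1 ≤ z ∨ 2 * n - z ≤ x))

/-- A column: a strictly increasing word over `C_n`. -/
def IsColumn (n : ℕ) (w : List ℕ) : Prop :=
  List.Pairwise (· < ·) w ∧ ∀ x ∈ w, x < 2 * n

/-- An admissible column: nonempty and `N_z(w) ≤ z` for all `z = 1,…,n`. -/
def Admissible (n : ℕ) (w : List ℕ) : Prop :=
  IsColumn n w ∧ w ≠ [] ∧ ∀ z, 1 ≤ z → z ≤ n → Nval n z w ≤ z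

/-- `v` is a (nonempty) strict factor of `w`. -/
def StrictFactor (v w : List ℕ) : Prop :=
  v ≠ [] ∧ ∃ w₀ w₁, w = w₀ ++ v ++ w₁ ∧ ¬(w₀ = [] ∧ w₁ = [])

/-- An almost admissible column: not admissible, but all strict factors are. -/
def AlmostAdmissible (n : ℕ) (w : List ℕ) : Prop :=
  IsColumn n w ∧ ¬Admissible n w ∧ ∀ v, StrictFactor v w → Admissible n v

/-- Lecouvey's defining relations `R₁`, `R₂`, `R₃` of the type `C` plactic
monoid, on words of letter indices.  The bar involution on indices is
`x ↦ 2n - 1 - x`; the unbarred value `x` has index `x - 1` and `x̄` has index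
`2n - x`. -/
inductive PlStep (n : ℕ) : List ℕ → List ℕ → Prop
  | R1a (x y z : ℕ) : x ≤ y → y < z → z < 2 * n → z ≠ 2 * n - 1 - x →
      PlStep n [y, z, x] [y, x, z]
  | R1b (x y z : ℕ) : x < y → y ≤ z → z < 2 * n → z ≠ 2 * n - 1 - x →
      PlStep n [x, z, y] [z, x, y]
  | R2a (x y : ℕ) : 1 < x → x ≤ n → x - 1 ≤ y → y ≤ 2 * n - x →
      PlStep n [y, 2 * n - x + 1, x - 2] [y, x - 1, 2 * n - x]
  | R2b (x y : ℕ) : 1 < x → x ≤ n → x - 1 ≤ y → y ≤ 2 * n - x →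
      PlStep n [x - 1, 2 * n - x, y] [2 * n - x + 1, x - 2, y]
  | R3 (w : List ℕ) (z : ℕ) : AlmostAdmissible n w → 1 ≤ z → z ≤ n →
      (z - 1) ∈ w → (2 * n - z) ∈ w → Nval n z w = z + 1 →
      (∀ z', 1 ≤ z' → z' < z →
        ¬((z' - 1) ∈ w ∧ (2 * n - z') ∈ w ∧ Nval n z' w = z' + 1)) →
      PlStep n w ((w.erase (z - 1)).erase (2 * n - z))

/-- One plactic rewriting step in context. -/
def CtxStep (n : ℕ) (u v : List ℕ) : Prop :=
  ∃ a b x y, PlStep n x y ∧ u = a ++ x ++ b ∧ v = a ++ y ++ b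

/-- The plactic congruence of type `C`. -/
def PlacticEq (n : ℕ) : List ℕ → List ℕ → Prop :=
  Relation.EqvGen (CtxStep n)

/-- An `(a,b)`-configuration (Kashiwara–Nakashima) in the pair of columns
`(c, d)`. -/
def HasConfig (n : ℕ) (c d : List ℕ) : Prop :=
  ∃ a b p q r s, 1 ≤ a ∧ a ≤ b ∧ b ≤ n ∧ p ≤ q ∧ q < r ∧ r ≤ s ∧
    ((getElem? c p = some (a - 1) ∧ getElem? d q = some (b - 1) ∧
      getElem? d r = some (2 * n - b) ∧ getElem? d s = some (2 * n - a)) ∨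
     (getElem? c p = some (a - 1) ∧ getElem? c q = some (b - 1) ∧
      getElem? c r = some (2 * n - b) ∧ getElem? d s = some (2 * n - a))) ∧
    b - a ≤ (s - r) + (q - p)

/-- `Prec n c d` means `c ⪯ d` : `c` is at least as long as `d`, entrywise
`≤`, and there is no `(a,b)`-configuration.  With the convention `ε = []`,
this gives `c ⪯ ε` for every `c`. -/
def Prec (n : ℕ) (c d : List ℕ) : Prop :=
  d.length ≤ c.length ∧
  (∀ i xi yi, getElem? c (i : ℕ) = some xi → getElem? d (i : ℕ) = some yi → xi ≤ yi) ∧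
  ¬HasConfig n c d

/-- A generator of `ACol`: the empty column `ε = []` or an admissible column. -/
def ColOrEps (n : ℕ) (c : List ℕ) : Prop := c = [] ∨ Admissible n c

/-- `(c₁ ← c₂) = d₁d₂` : the pair `(d₁, d₂)` is the `ε`-padded normal form of
the column insertion, characterised as the normal pair plactically congruent
to `c₁c₂`. -/
def InsPair (n : ℕ) (c₁ c₂ d₁ d₂ : List ℕ) : Prop :=
  ColOrEps n d₁ ∧ ColOrEps n d₂ ∧ Prec n d₂ d₁ ∧
  PlacticEq n (c₁ ++ c₂) (d₁ ++ d₂)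

/-- A rewriting step of the `2`-polygraph `ACol` at position `j`. -/
def StepAt (n : ℕ) (j : ℕ) (w w' : List (List ℕ)) : Prop :=
  ∃ (u v : List (List ℕ)) (c₁ c₂ d₁ d₂ : List ℕ),
    u.length = j ∧ w = u ++ c₁ :: c₂ :: v ∧ w' = u ++ d₁ :: d₂ :: v ∧
    ¬Prec n c₂ c₁ ∧ InsPair n c₁ c₂ d₁ d₂

/-- A rewriting step of `ACol` (at some position). -/
def AColStep (n : ℕ) (w w' : List (List ℕ)) : Prop := ∃ j, StepAt n j w w'

/-- The congruence generated by `ACol`, presenting `Pl^ℕ(C_n)`. -/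
def AColEq (n : ℕ) : List (List ℕ) → List (List ℕ) → Prop :=
  Relation.EqvGen (AColStep n)

/-- `RedTo n w s w'` : applying the reduction strategy `s` (a list of
positions) to `w` is valid and yields `w'`. -/
inductive RedTo (n : ℕ) : List (List ℕ) → List ℕ → List (List ℕ) → Prop
  | nil (w : List (List ℕ)) : RedTo n w [] w
  | cons {w w' w'' : List (List ℕ)} {j : ℕ} {s : List ℕ} :
      StepAt n j w w' → RedTo n w' s w'' → RedTo n w (j :: s) w''

/-- A tableau word: a word of admissible columns with `c_{i+1} ⪯ c_i`. -/
def TabWord (n : ℕ) (g : List (List ℕ)) : Prop :=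
  (∀ c ∈ g, Admissible n c) ∧ List.Chain' (fun cl cr => Prec n cr cl) g

/-- The label of the crystal edge going out of the letter with index `x`. -/
def labelOf (n x : ℕ) : ℕ := if x < n then x + 1 else 2 * n - 1 - x

def phiL (n i x : ℕ) : ℕ := if x + 1 < 2 * n ∧ labelOf n x = i then 1 else 0

def epsL (n i x : ℕ) : ℕ := if 0 < x ∧ labelOf n (x - 1) = i then 1 else 0

/-- `ε_i` of a word (Kashiwara). -/
def epsW (n i : ℕ) : List ℕ → ℕ
  | [] => 0
  | x :: u => epsL n i x + (epsW n i u - phiL n i x)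

/-- `φ_i` of a word (Kashiwara). -/
def phiW (n i : ℕ) : List ℕ → ℕ
  | [] => 0
  | x :: u => phiW n i u + (phiL n i x - epsW n i u)

/-- The Kashiwara lowering operator `f_i` on words of `C_n^*`. -/
def fW (n i : ℕ) : List ℕ → Option (List ℕ)
  | [] => none
  | x :: u =>
      if epsW n i u < phiL n i x then some ((x + 1) :: u)
      else (fW n i u).map (x :: ·)

/-- The Kashiwara raising operator `e_i` on words of `C_n^*`. -/
def eW (n i : ℕ) : List ℕ → Option (List ℕ)
  | [] => none
  | x :: u =>
      if epsW n i u ≤ phiL n i x then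
        (if epsL n i x = 1 then some ((x - 1) :: u) else none)
      else (eW n i u).map (x :: ·)

/-- `f_i` on words over `ACol(C_n)` (each letter a column, `ε = []`). -/
def fA (n i : ℕ) : List (List ℕ) → Option (List (List ℕ))
  | [] => none
  | c :: w =>
      if epsW n i w.flatten < phiW n i c then (fW n i c).map (· :: w)
      else (fA n i w).map (c :: ·)

/-- `e_i` on words over `ACol(C_n)`. -/
def eA (n i : ℕ) : List (List ℕ) → Option (List (List ℕ))
  | [] => none
  | c :: w =>
      if epsW n i w.flatten ≤ phiW n i c then (eW n i c).map (· :: w)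
      else (eA n i w).map (c :: ·)

/-! C-trees.  A labeling of the `C`-tree is encoded by two functions
`sOut i j = s(ij)` (outer vertices, `sOut i 0 = s(i)`) and
`sInn i j = s(ij⁻)` (inner vertices, `j ≥ 1`), for strands `i ≥ 1`. -/

def SO (sOut : ℕ → ℕ → ℕ) (i j : ℕ) : ℕ := ∑ l ∈ Finset.range (j + 1), sOut i l
def SI (sInn : ℕ → ℕ → ℕ) (i j : ℕ) : ℕ := ∑ l ∈ Finset.range (j + 1), sInn i l

/-- The valuation `q(ij)` at an outer vertex. -/
def qOut (sOut sInn : ℕ → ℕ → ℕ) (i j : ℕ) : ℕ := SO sOut i j - SI sInn i (j - 1)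

/-- The valuation `q(ij⁻)` at an inner vertex. -/
def qInn (sOut sInn : ℕ → ℕ → ℕ) (i j : ℕ) : ℕ := SO sOut i j - SI sInn i j

/-- Labels vanish outside the rank-`k` truncation (and on the fictitious
strand `0` and inner vertices `i0⁻`). -/
def TreeSupport (k : ℕ) (sOut sInn : ℕ → ℕ → ℕ) : Prop :=
  (∀ i j, i = 0 ∨ k < i + j → sOut i j = 0) ∧
  (∀ i j, i = 0 ∨ j = 0 ∨ k < i + j → sInn i j = 0)

/-- `n`-labeling condition: `0 ≤ q(v) ≤ n` at every vertex. -/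
def NLabeled (n : ℕ) (sOut sInn : ℕ → ℕ → ℕ) : Prop :=
  ∀ i j, SI sInn i j ≤ SO sOut i j ∧ qOut sOut sInn i j ≤ n

/-- Column conditions: `q(ij) ≤ q((i−1)(j+1)⁻)` and `q(ij) ≤ q((i−1)j⁻)`. -/
def ColumnCond (k : ℕ) (sOut sInn : ℕ → ℕ → ℕ) : Prop :=
  ∀ i j, 2 ≤ i → i + j ≤ k →
    qOut sOut sInn i j ≤ qInn sOut sInn (i - 1) (j + 1) ∧
    (1 ≤ j → qOut sOut sInn i j ≤ qInn sOut sInn (i - 1) j)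

/-- Admissibility conditions of a labeled `C`-tree. -/
def AdmissCond (k : ℕ) (sOut sInn : ℕ → ℕ → ℕ) : Prop :=
  ∀ t l, t ≤ k → l + 1 ≤ t →
    (∑ i ∈ Finset.range (l + 1), (sOut (t - i) i + sInn (t - i) i)) ≤
      qOut sOut sInn (t - l) l

/-- An admissible `n`-labeled `C`-tree of rank `k`. -/
def IsAdmTree (n k : ℕ) (sOut sInn : ℕ → ℕ → ℕ) : Prop :=
  TreeSupport k sOut sInn ∧ NLabeled n sOut sInn ∧
  ColumnCond k sOut sInn ∧ AdmissCond k sOut sInn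

/-- The block column `ρ(ij)` read off an outer vertex. -/
def rhoOut (sOut sInn : ℕ → ℕ → ℕ) (i j : ℕ) : List ℕ :=
  if j = 0 then List.range (sOut i 0)
  else List.range' (qInn sOut sInn i (j - 1)) (sOut i j)

/-- The block column `ρ(ij⁻)` read off an inner vertex. -/
def rhoInn (n : ℕ) (sOut sInn : ℕ → ℕ → ℕ) (i j : ℕ) : List ℕ :=
  List.range' (2 * n - qOut sOut sInn i j) (sInn i j)

/-- The reading `ω_t` of the `t`-th level. -/
def levelWord (n : ℕ) (sOut sInn : ℕ → ℕ → ℕ) (t : ℕ) : List ℕ :=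
  ((List.range t).map (fun l => rhoOut sOut sInn (t - l) l)).flatten ++
  ((List.range (t - 1)).map (fun m => rhoInn n sOut sInn (m + 1) (t - (m + 1)))).flatten

/-- The reading `ω(T) ∈ ACol(C_n)^*` of a labeled `C`-tree of rank `k`. -/
def omegaT (n k : ℕ) (sOut sInn : ℕ → ℕ → ℕ) : List (List ℕ) :=
  (List.range k).map (fun t => levelWord n sOut sInn (t + 1))

theorem flatten_map_range'_tsub {b : ℕ → ℕ} {m : ℕ} (hb : MonotoneOn b (Set.Iic m)) :
    ((List.range m).map fun j => List.range' (b j) (b (j + 1) - b j)).flatten =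
      List.range' (b 0) (b m - b 0) := by
  induction m with
  | zero => simp
  | succ m ih =>
    have h0m : b 0 ≤ b m := hb (by simp) (by simp) (Nat.zero_le m)
    have hmm : b m ≤ b (m + 1) := hb (by simp) (by simp) (Nat.le_succ m)
    have happend := List.range'_append_1 (s := b 0) (m := b m - b 0) (n := b (m + 1) - b m)
    rw [Nat.add_sub_cancel' h0m, show b m - b 0 + (b (m + 1) - b m) = b (m + 1) - b 0 by omega]
      at happend
    simpa [List.range_succ, ih (hb.mono (Set.Iic_subset_Iic.mpr (Nat.le_succ m)))]
      using happend

theorem prec_range_range {n b c : ℕ} (hcb : c ≤ b) (hcn : c ≤ n) :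
    Prec n (List.range b) (List.range c) := by
  refine ⟨by simpa using hcb, fun i x y hx hy => ?_, ?_⟩
  · simp only [List.getElem?_eq_some_iff, List.length_range, List.getElem_range] at hx hy
    omega
  · rintro ⟨a', b', p, q, r, s, ha', hab', hbn', -, -, -, hconfig, -⟩
    have hlast : (List.range c)[s]? = some (2 * n - a') := by
      rcases hconfig with ⟨-, -, -, h⟩ | ⟨-, -, -, h⟩ <;> exact h
    simp only [List.getElem?_eq_some_iff, List.length_range, List.getElem_range,
      exists_prop] at hlast
    omega

/-- The labeling of the outer vertices of the standard `C`-tree `T(a₁,…,a_k)`. -/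
def standardLabel (k : ℕ) (a : ℕ → ℕ) (i j : ℕ) : ℕ :=
  if 1 ≤ i ∧ i + j ≤ k then a (k - j) - a (k - j + 1) else 0

theorem qOut_zero_inner (sOut : ℕ → ℕ → ℕ) (i j : ℕ) :
    qOut sOut (fun _ _ => 0) i j = SO sOut i j := by
  simp [qOut, SI]

theorem qInn_zero_inner (sOut : ℕ → ℕ → ℕ) (i j : ℕ) :
    qInn sOut (fun _ _ => 0) i j = SO sOut i j := by
  simp [qInn, SI]

section StandardTree

variable {n k : ℕ} {a : ℕ → ℕ}

theorem antitoneOn_Icc_of_succ_le (ha : ∀ i, 1 ≤ i → i ≤ k → a (i + 1) ≤ a i) :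
    AntitoneOn a (Set.Icc 1 (k + 1)) :=
  antitoneOn_of_add_one_le Set.ordConnected_Icc fun m _ hm hm' =>
    ha m hm.1 (by simp at hm'; omega)

theorem SO_standardLabel (ha : ∀ i, 1 ≤ i → i ≤ k → a (i + 1) ≤ a i)
    (hak : a (k + 1) = 0) {i : ℕ} (hi : 1 ≤ i) (hik : i ≤ k) (j : ℕ) :
    SO (standardLabel k a) i j = a (k - min j (k - i)) := by
  induction j with
  | zero => simp [SO, standardLabel, hi, hik, hak]
  | succ j ih =>
    rw [SO, Finset.sum_range_succ, ← SO, ih, standardLabel]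
    split_ifs with hj
    · have hstep : a (k - j) ≤ a (k - (j + 1)) :=
        antitoneOn_Icc_of_succ_le ha ⟨by omega, by omega⟩ ⟨by omega, by omega⟩ (by omega)
      rw [show k - (j + 1) + 1 = k - j by omega, show k - min j (k - i) = k - j by omega,
        show k - min (j + 1) (k - i) = k - (j + 1) by omega]
      omega
    · rw [show min (j + 1) (k - i) = min j (k - i) by omega, add_zero]

theorem SO_standardLabel_of_not_mem {i : ℕ} (hi : i = 0 ∨ k < i) (j : ℕ) :
    SO (standardLabel k a) i j = 0 :=
  Finset.sum_eq_zero fun l _ => if_neg (by omega)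

theorem standardLabel_nLabeled (ha : ∀ i, 1 ≤ i → i ≤ k → a (i + 1) ≤ a i)
    (hak : a (k + 1) = 0) (han : ∀ i, 1 ≤ i → i ≤ k → a i ≤ n) :
    NLabeled n (standardLabel k a) (fun _ _ => 0) := by
  intro i j
  refine ⟨by simp [SI], ?_⟩
  rw [qOut_zero_inner]
  by_cases hi : 1 ≤ i ∧ i ≤ k
  · rw [SO_standardLabel ha hak hi.1 hi.2]
    exact han _ (by omega) (by omega)
  · rw [SO_standardLabel_of_not_mem (by omega)]
    exact Nat.zero_le n

theorem standardLabel_columnCond (ha : ∀ i, 1 ≤ i → i ≤ k → a (i + 1) ≤ a i)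
    (hak : a (k + 1) = 0) : ColumnCond k (standardLabel k a) (fun _ _ => 0) := by
  intro i j hi hijk
  simp only [qOut_zero_inner, qInn_zero_inner,
    SO_standardLabel ha hak (i := i) (by omega) (by omega),
    SO_standardLabel ha hak (i := i - 1) (by omega) (by omega)]
  refine ⟨?_, fun _ => le_of_eq (by congr 1; omega)⟩
  rw [show k - min j (k - i) = k - j by omega,
    show k - min (j + 1) (k - (i - 1)) = k - (j + 1) by omega]
  exact antitoneOn_Icc_of_succ_le ha ⟨by omega, by omega⟩ ⟨by omega, by omega⟩ (by omega)

theorem standardLabel_admissCond : AdmissCond k (standardLabel k a) (fun _ _ => 0) := by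
  -- the admissibility sums are equalities, as `s(ij)` depends on `j` only
  intro t l htk hlt
  rw [qOut_zero_inner, SO]
  refine le_of_eq (Finset.sum_congr rfl fun i hi => ?_)
  simp only [Finset.mem_range] at hi
  simp only [standardLabel, add_zero]
  rw [if_pos (by omega), if_pos (by omega)]

theorem standardLabel_isAdmTree (ha : ∀ i, 1 ≤ i → i ≤ k → a (i + 1) ≤ a i)
    (hak : a (k + 1) = 0) (han : ∀ i, 1 ≤ i → i ≤ k → a i ≤ n) :
    IsAdmTree n k (standardLabel k a) (fun _ _ => 0) :=
  ⟨⟨fun _ _ h => if_neg (by omega), fun _ _ _ => rfl⟩, standardLabel_nLabeled ha hak han,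
    standardLabel_columnCond ha hak, standardLabel_admissCond⟩

theorem rhoOut_standardLabel (ha : ∀ i, 1 ≤ i → i ≤ k → a (i + 1) ≤ a i)
    (hak : a (k + 1) = 0) {i j : ℕ} (hi : 1 ≤ i) (hijk : i + j ≤ k) :
    rhoOut (standardLabel k a) (fun _ _ => 0) i j =
      List.range' (a (k + 1 - j)) (a (k + 1 - (j + 1)) - a (k + 1 - j)) := by
  by_cases hj : j = 0
  · subst hj
    simp [rhoOut, standardLabel, hi, show i ≤ k by omega, hak, List.range_eq_range']
  · rw [rhoOut, if_neg hj, standardLabel, if_pos ⟨hi, hijk⟩, qInn_zero_inner,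
      SO_standardLabel ha hak hi (by omega), show k - min (j - 1) (k - i) = k + 1 - j by omega,
      show k - j + 1 = k + 1 - j by omega, show k + 1 - (j + 1) = k - j by omega]

theorem levelWord_standardLabel (ha : ∀ i, 1 ≤ i → i ≤ k → a (i + 1) ≤ a i)
    (hak : a (k + 1) = 0) {t : ℕ} (htk : t < k) :
    levelWord n (standardLabel k a) (fun _ _ => 0) (t + 1) = List.range (a (k - t)) := by
  have hmono : MonotoneOn (fun j => a (k + 1 - j)) (Set.Iic (t + 1)) :=
    fun x hx y hy hxy => antitoneOn_Icc_of_succ_le ha ⟨by simp at hy; omega, by omega⟩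
      ⟨by simp at hx; omega, by omega⟩ (by omega)
  have houter :
      (List.range (t + 1)).map (fun l => rhoOut (standardLabel k a) (fun _ _ => 0) (t + 1 - l) l) =
        (List.range (t + 1)).map fun j =>
          List.range' (a (k + 1 - j)) (a (k + 1 - (j + 1)) - a (k + 1 - j)) :=
    List.map_congr_left fun l hl =>
      rhoOut_standardLabel ha hak (by simp at hl; omega) (by simp at hl; omega)
  simp only [levelWord, rhoInn, List.range'_zero, List.map_const', List.flatten_replicate_nil,
    List.append_nil, houter, flatten_map_range'_tsub hmono]
  simp [hak, List.range_eq_range']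

theorem omegaT_standardLabel (ha : ∀ i, 1 ≤ i → i ≤ k → a (i + 1) ≤ a i)
    (hak : a (k + 1) = 0) :
    omegaT n k (standardLabel k a) (fun _ _ => 0) =
      (List.range k).map fun i => List.range (a (k - i)) :=
  List.map_congr_left fun _ ht => levelWord_standardLabel ha hak (List.mem_range.mp ht)

theorem isChain_prec_range (ha : ∀ i, 1 ≤ i → i ≤ k → a (i + 1) ≤ a i)
    (han : ∀ i, 1 ≤ i → i ≤ k → a i ≤ n) :
    List.IsChain (fun cl cr => Prec n cr cl)
      ((List.range k).map fun i => List.range (a (k - i))) := by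
  rw [List.isChain_map]
  cases k with
  | zero => simp
  | succ m =>
    rw [List.isChain_range_succ]
    intro i hi
    exact prec_range_range
      (antitoneOn_Icc_of_succ_le ha ⟨by omega, by omega⟩ ⟨by omega, by omega⟩ (by omega))
      (han _ (by omega) (by omega))

end StandardTree

/-- The standard `C`-tree `T(a₁,…,a_k)` of a weakly decreasing sequence
`n ≥ a₁ ≥ ⋯ ≥ a_k ≥ 0` (with `a_{k+1} = 0`), labeled by
`s(ij) = a_{k−j} − a_{k−j+1}` for `i + j ≤ k` and `0` elsewhere, is an
admissible `n`-labeled `C`-tree, and its reading is the normal-form word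
`ω(T) = 𝔠(a_k)𝔠(a_{k−1})⋯𝔠(a₁)` (where `𝔠(a) = 12⋯a = List.range a`). -/
theorem stmt13 (n k : ℕ) (a : ℕ → ℕ)
    (ha : ∀ i, 1 ≤ i → i ≤ k → a (i + 1) ≤ a i)
    (hak : a (k + 1) = 0)
    (han : ∀ i, 1 ≤ i → i ≤ k → a i ≤ n)
    (sOut sInn : ℕ → ℕ → ℕ)
    (hs : sOut = fun i j =>
      if 1 ≤ i ∧ i + j ≤ k then a (k - j) - a (k - j + 1) else 0)
    (hsi : sInn = fun _ _ => 0) :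
    IsAdmTree n k sOut sInn ∧
    omegaT n k sOut sInn = (List.range k).map (fun i => List.range (a (k - i))) ∧
    List.Chain' (fun cl cr => Prec n cr cl) (omegaT n k sOut sInn) := by
  obtain rfl : sOut = standardLabel k a := hs
  subst hsi
  rw [omegaT_standardLabel ha hak]
  exact ⟨standardLabel_isAdmTree ha hak han, rfl, isChain_prec_range ha han⟩

end TypeC
end

section
/- For every admissible C-tree T, the reading ω(T) is a word of highest weight in ACol(C_n)*, i.e., no Kashiwara raising operator e_i is defined on ω(T). Moreover, f_i·ω(T) is defined if and only if i = q_j(T) for some j. -/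
namespace TypeC

/-!
Only the `i`-signature `(ε_i, φ_i)` of the concatenated reading matters, and it is computed
block by block by the tensor product rule. A block column `a+1, …, c`, and its barred mirror
image, has the signature of a single letter moving from `a` to `c`. Reading `ω(T)` level by
level, each block moves one strand of the tree from one valuation to the next, and each move
finds its strand already counted by `φ_i`. Hence `ε_i` stays `0`, and `φ_i` is the number of
strands whose valuation after the last level is `i`.
-/

lemma epsW_append_and_phiW_append (n i : ℕ) (u v : List ℕ) :
    epsW n i (u ++ v) = epsW n i u + (epsW n i v - phiW n i u) ∧
    phiW n i (u ++ v) = phiW n i v + (phiW n i u - epsW n i v) := by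
  induction u with
  | nil => simp [epsW, phiW]
  | cons x u ih =>
    simp only [List.cons_append, epsW, phiW, ih.1, ih.2]
    omega

lemma epsW_append (n i : ℕ) (u v : List ℕ) :
    epsW n i (u ++ v) = epsW n i u + (epsW n i v - phiW n i u) :=
  (epsW_append_and_phiW_append n i u v).1

lemma phiW_append (n i : ℕ) (u v : List ℕ) :
    phiW n i (u ++ v) = phiW n i v + (phiW n i u - epsW n i v) :=
  (epsW_append_and_phiW_append n i u v).2

lemma epsL_le_one (n i x : ℕ) : epsL n i x ≤ 1 := by
  unfold epsL; split <;> omega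

lemma phiL_le_one (n i x : ℕ) : phiL n i x ≤ 1 := by
  unfold phiL; split <;> omega

lemma epsL_eq_zero_of_phiL_eq_one {n i x : ℕ} (h : phiL n i x = 1) : epsL n i x = 0 := by
  unfold epsL phiL labelOf at *
  split_ifs at * <;> omega

lemma eW_eq_none_iff (n i : ℕ) (w : List ℕ) : eW n i w = none ↔ epsW n i w = 0 := by
  induction w with
  | nil => simp [eW, epsW]
  | cons x u ih =>
    have h₁ := epsL_le_one n i x
    have h₂ := phiL_le_one n i x
    have h₃ := @epsL_eq_zero_of_phiL_eq_one n i x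
    rw [eW, epsW]
    split_ifs
    · simp only [false_iff]; omega
    · simp only [true_iff]; omega
    · simp only [Option.map_eq_none_iff, ih]; omega

lemma fW_eq_none_iff (n i : ℕ) (w : List ℕ) : fW n i w = none ↔ phiW n i w = 0 := by
  induction w with
  | nil => simp [fW, phiW]
  | cons x u ih =>
    rw [fW, phiW]
    split_ifs
    · simp only [false_iff]; omega
    · simp only [Option.map_eq_none_iff, ih]; omega

lemma eA_eq_none_iff (n i : ℕ) (w : List (List ℕ)) :
    eA n i w = none ↔ epsW n i w.flatten = 0 := by
  induction w with
  | nil => simp [eA, epsW]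
  | cons c u ih =>
    rw [eA, List.flatten_cons, epsW_append]
    split_ifs
    · simp only [Option.map_eq_none_iff, eW_eq_none_iff]; omega
    · simp only [Option.map_eq_none_iff, ih]; omega

lemma fA_isSome_iff (n i : ℕ) (w : List (List ℕ)) :
    (fA n i w).isSome ↔ 0 < phiW n i w.flatten := by
  induction w with
  | nil => simp [fA, phiW]
  | cons c u ih =>
    rw [fA, List.flatten_cons, phiW_append]
    split_ifs
    · rw [Option.isSome_map, Option.isSome_iff_ne_none, Ne, fW_eq_none_iff]; omega
    · rw [Option.isSome_map, ih]; omega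

/-- The `i`-signature of one strand moving from valuation `a` to valuation `c`. -/
def HasMoveSignature (n i : ℕ) (b : List ℕ) (a c : ℕ) : Prop :=
  epsW n i b = (if a = i ∧ a ≠ c then 1 else 0) ∧ phiW n i b = if c = i ∧ a ≠ c then 1 else 0

section MoveSignature

variable {n i : ℕ}

lemma hasMoveSignature_range' (hi : 1 ≤ i) {s a : ℕ} (h : a + s ≤ n) :
    HasMoveSignature n i (List.range' a s) a (a + s) := by
  induction s generalizing a with
  | zero => simp [HasMoveSignature, epsW, phiW]
  | succ s ih =>
    obtain ⟨he, hf⟩ := ih (a := a + 1) (by omega)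
    refine ⟨?_, ?_⟩ <;>
    · simp only [List.range'_succ, epsW, phiW, he, hf, epsL, phiL, labelOf]
      split_ifs <;> omega

lemma hasMoveSignature_range'_barred (hi : 1 ≤ i) (hin : i ≤ n) {s c : ℕ} (hc : c ≤ n)
    (hs : s ≤ c) : HasMoveSignature n i (List.range' (2 * n - c) s) c (c - s) := by
  induction s generalizing c with
  | zero => simp [HasMoveSignature, epsW, phiW]
  | succ s ih =>
    obtain ⟨he, hf⟩ := ih (c := c - 1) (by omega) (by omega)
    rw [show 2 * n - (c - 1) = 2 * n - c + 1 by omega, show c - 1 - s = c - (s + 1) by omega]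
      at he hf
    refine ⟨?_, ?_⟩ <;>
    · simp only [List.range'_succ, epsW, phiW, he, hf, epsL, phiL, labelOf]
      split_ifs <;> omega

lemma HasMoveSignature.append {w b : List ℕ} {a c m : ℕ} (hb : HasMoveSignature n i b a c)
    (hw : epsW n i w = 0) (hm : phiW n i w = m + if a = i then 1 else 0) :
    epsW n i (w ++ b) = 0 ∧ phiW n i (w ++ b) = m + if c = i then 1 else 0 := by
  rw [epsW_append, phiW_append, hw, hm, hb.1, hb.2]
  constructor <;> split_ifs <;> omega

lemma HasMoveSignature.append_flatten {w : List ℕ} {b : ℕ → List ℕ} {src tgt : ℕ → ℕ}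
    {N m : ℕ} (hb : ∀ l < N, HasMoveSignature n i (b l) (src l) (tgt l))
    (hw : epsW n i w = 0)
    (hm : phiW n i w = m + ∑ l ∈ Finset.range N, if src l = i then 1 else 0) :
    epsW n i (w ++ ((List.range N).map b).flatten) = 0 ∧
      phiW n i (w ++ ((List.range N).map b).flatten) =
        m + ∑ l ∈ Finset.range N, if tgt l = i then 1 else 0 := by
  induction N generalizing m with
  | zero => simpa using ⟨hw, hm⟩
  | succ N ih =>
    obtain ⟨he, hf⟩ := ih (m := m + if src N = i then 1 else 0)
      (fun l hl => hb l (by omega)) (by rw [hm, Finset.sum_range_succ]; ring)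
    rw [List.range_succ, List.map_append, List.flatten_append, ← List.append_assoc,
      List.map_singleton, List.flatten_singleton, Finset.sum_range_succ, ← add_assoc]
    exact (hb N (by omega)).append he (by rw [hf]; ring)

end MoveSignature
section CTree

variable {n i : ℕ} {sOut sInn : ℕ → ℕ → ℕ}

lemma qOut_le (hlab : NLabeled n sOut sInn) (a l : ℕ) : qOut sOut sInn a l ≤ n :=
  (hlab a l).2

lemma qOut_zero (hinn0 : ∀ a, sInn a 0 = 0) (a : ℕ) : qOut sOut sInn a 0 = sOut a 0 := by
  simp [qOut, SO, SI, hinn0]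

lemma qInn_add_sOut (hlab : NLabeled n sOut sInn) (a l : ℕ) :
    qInn sOut sInn a l + sOut a (l + 1) = qOut sOut sInn a (l + 1) := by
  have := (hlab a l).1
  simp only [qInn, qOut, SO, SI, Nat.add_sub_cancel, Finset.sum_range_succ _ (l + 1)] at *
  omega

lemma qInn_add_sInn (hlab : NLabeled n sOut sInn) (hinn0 : ∀ a, sInn a 0 = 0) (a l : ℕ) :
    qInn sOut sInn a l + sInn a l = qOut sOut sInn a l := by
  cases l with
  | zero => simp [qInn, qOut, hinn0]
  | succ l =>
    have := (hlab a (l + 1)).1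
    simp only [qInn, qOut, SI, Nat.add_sub_cancel, Finset.sum_range_succ _ (l + 1)] at *
    omega

lemma hasMoveSignature_rhoOut_zero (hi : 1 ≤ i) (hlab : NLabeled n sOut sInn)
    (hinn0 : ∀ a, sInn a 0 = 0) (a : ℕ) :
    HasMoveSignature n i (rhoOut sOut sInn a 0) 0 (qOut sOut sInn a 0) := by
  have hle := qOut_le hlab a 0
  rw [qOut_zero hinn0] at hle ⊢
  simpa [rhoOut, List.range_eq_range'] using hasMoveSignature_range' hi (a := 0) (by simpa)

lemma hasMoveSignature_rhoOut_succ (hi : 1 ≤ i) (hlab : NLabeled n sOut sInn) (a l : ℕ) :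
    HasMoveSignature n i (rhoOut sOut sInn a (l + 1)) (qInn sOut sInn a l)
      (qOut sOut sInn a (l + 1)) := by
  rw [← qInn_add_sOut hlab]
  exact hasMoveSignature_range' hi ((qInn_add_sOut hlab a l).symm ▸ qOut_le hlab a (l + 1))

lemma hasMoveSignature_rhoInn (hi : 1 ≤ i) (hin : i ≤ n) (hlab : NLabeled n sOut sInn)
    (hinn0 : ∀ a, sInn a 0 = 0) (a l : ℕ) :
    HasMoveSignature n i (rhoInn n sOut sInn a l) (qOut sOut sInn a l) (qInn sOut sInn a l) := by
  have h := qInn_add_sInn hlab hinn0 a l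
  have := hasMoveSignature_range'_barred hi hin (qOut_le hlab a l) (s := sInn a l) (by omega)
  rwa [show qOut sOut sInn a l - sInn a l = qInn sOut sInn a l by omega] at this

/-- Strand `t - l` sits at depth `l` of level `t`. -/
def valuationCount (sOut sInn : ℕ → ℕ → ℕ) (i t : ℕ) : ℕ :=
  ∑ l ∈ Finset.range t, if qInn sOut sInn (t - l) l = i then 1 else 0

lemma sum_range_reflect_strands {M : Type*} [AddCommMonoid M] (f : ℕ → ℕ → M) (t : ℕ) :
    ∑ m ∈ Finset.range t, f (m + 1) (t - m) = ∑ l ∈ Finset.range t, f (t - l) (l + 1) := by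
  rw [← Finset.sum_range_reflect]
  refine Finset.sum_congr rfl fun l hl => ?_
  have := Finset.mem_range.mp hl
  congr 1 <;> omega

lemma levelWord_eq (t : ℕ) : levelWord n sOut sInn (t + 1) =
    rhoOut sOut sInn (t + 1) 0 ++
      ((List.range t).map fun l => rhoOut sOut sInn (t - l) (l + 1)).flatten ++
      ((List.range t).map fun m => rhoInn n sOut sInn (m + 1) (t - m)).flatten := by
  simp [levelWord, List.range_succ_eq_map, Function.comp_def]

lemma levelWord_append (hi : 1 ≤ i) (hin : i ≤ n) (hlab : NLabeled n sOut sInn)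
    (hinn0 : ∀ a, sInn a 0 = 0) {t : ℕ} {w : List ℕ} (hw : epsW n i w = 0)
    (hm : phiW n i w = valuationCount sOut sInn i t) :
    epsW n i (w ++ levelWord n sOut sInn (t + 1)) = 0 ∧
      phiW n i (w ++ levelWord n sOut sInn (t + 1)) = valuationCount sOut sInn i (t + 1) := by
  rw [levelWord_eq, ← List.append_assoc, ← List.append_assoc]
  obtain ⟨h₁, h₁'⟩ := (hasMoveSignature_rhoOut_zero hi hlab hinn0 (t + 1)).append hw
    (m := valuationCount sOut sInn i t) (by rw [hm, if_neg (by omega), add_zero])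
  obtain ⟨h₂, h₂'⟩ := HasMoveSignature.append_flatten
    (src := fun l => qInn sOut sInn (t - l) l) (tgt := fun l => qOut sOut sInn (t - l) (l + 1))
    (fun l _ => hasMoveSignature_rhoOut_succ hi hlab (t - l) l) h₁
    (by rw [h₁', valuationCount, add_comm])
  obtain ⟨h₃, h₃'⟩ := HasMoveSignature.append_flatten
    (src := fun m => qOut sOut sInn (m + 1) (t - m)) (tgt := fun m => qInn sOut sInn (m + 1) (t - m))
    (fun m _ => hasMoveSignature_rhoInn hi hin hlab hinn0 (m + 1) (t - m)) h₂
    (by rw [h₂', sum_range_reflect_strands (fun a l => if qOut sOut sInn a l = i then 1 else 0)])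
  refine ⟨h₃, ?_⟩
  rw [h₃', sum_range_reflect_strands (fun a l => if qInn sOut sInn a l = i then 1 else 0),
    valuationCount, Finset.sum_range_succ', add_comm]
  simp only [Nat.add_sub_add_right, Nat.sub_zero]
  rfl

lemma omegaT_flatten (hi : 1 ≤ i) (hin : i ≤ n) (hlab : NLabeled n sOut sInn)
    (hinn0 : ∀ a, sInn a 0 = 0) (k : ℕ) :
    epsW n i (omegaT n k sOut sInn).flatten = 0 ∧
      phiW n i (omegaT n k sOut sInn).flatten = valuationCount sOut sInn i k := by
  induction k with
  | zero => simp [omegaT, valuationCount, epsW, phiW]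
  | succ k ih =>
    unfold omegaT at ih ⊢
    rw [List.range_succ, List.map_append, List.flatten_append]
    simpa using levelWord_append hi hin hlab hinn0 ih.1 ih.2

lemma valuationCount_pos_iff (i k : ℕ) :
    0 < valuationCount sOut sInn i k ↔ ∃ j, 1 ≤ j ∧ j ≤ k ∧ qInn sOut sInn j (k - j) = i := by
  simp only [valuationCount, Finset.sum_pos_iff, Finset.mem_range]
  constructor
  · rintro ⟨l, hl, hpos⟩
    refine ⟨k - l, by omega, by omega, ?_⟩
    rw [show k - (k - l) = l by omega]
    by_contra hne
    simp [hne] at hpos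
  · rintro ⟨j, hj, hjk, hq⟩
    refine ⟨k - j, by omega, ?_⟩
    rw [show k - (k - j) = j by omega]
    simp [hq]

end CTree

/-- The reading `ω(T)` of an admissible `C`-tree is a highest weight word:
no raising operator `e_i` is defined on it.  Moreover `f_i·ω(T)` is defined
if and only if `i = q_j(T)` for some strand `j`. -/
theorem stmt15 (n k : ℕ) (sOut sInn : ℕ → ℕ → ℕ)
    (h : IsAdmTree n k sOut sInn) :
    (∀ i, 1 ≤ i → i ≤ n → eA n i (omegaT n k sOut sInn) = none) ∧
    (∀ i, 1 ≤ i → i ≤ n →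
      ((fA n i (omegaT n k sOut sInn)).isSome ↔
        ∃ j, 1 ≤ j ∧ j ≤ k ∧ qInn sOut sInn j (k - j) = i)) := by
  obtain ⟨hsupp, hlab, -, -⟩ := h
  have hinn0 : ∀ a, sInn a 0 = 0 := fun a => hsupp.2 a 0 (Or.inr (Or.inl rfl))
  refine ⟨fun i hi hin => ?_, fun i hi hin => ?_⟩
  · exact (eA_eq_none_iff n i _).2 (omegaT_flatten hi hin hlab hinn0 k).1
  · rw [fA_isSome_iff, (omegaT_flatten hi hin hlab hinn0 k).2, valuationCount_pos_iff]

end TypeC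
end
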